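/- arXiv:2206.10992 — 3 statements merged into one kernel-verified Lean document; each statement's English description precedes it below -/
import Mathlib

section
/- Let (X, d) be a locally compact metric space that is a Baire space. If a group G acting on X by homeomorphisms is chaotic on X, then G is sensitive to initial conditions on (X, d). -/
/-!
If the action is not sensitive, then for every `ε > 0` some nonempty open set has all its
translates of diameter `< ε`. That set meets both the dense orbit of `x` and a closed orbit, so
`x` is uniformly `ε`-near a point `c` with closed orbit: `d(g • x, g • c) ≤ ε` for every `g`.
Uniform nearness is a closed, `G`-invariant relation. Approximating a point `z` with closed orbit
and a compact neighbourhood by points `g • x`, the companions `g • c` accumulate by compactness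
at some `w` in the closed orbit of `c`, and `z` is uniformly `ε`-near `w`. Translating back, `x`
lies within `2ε` of the orbit of `z`; hence `x` is in the closed orbit of `z`, and the orbit of
`x` is closed after all.
-/

open Pointwise

/-- The diameter (in `ℝ≥0∞`) of a set `S` with respect to a distance function `d`. -/
noncomputable def ediamD {X : Type*} (d : X → X → ℝ) (S : Set X) : ENNReal :=
  ⨆ (y : S) (z : S), ENNReal.ofReal (d y.1 z.1)

/-- `G` is sensitive to initial conditions with respect to the distance function `d`. -/
def SensitiveOn (G : Type*) {X : Type*} [Group G] [MulAction G X] [TopologicalSpace X]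
    (d : X → X → ℝ) : Prop :=
  ∃ δ : ℝ, 0 < δ ∧ ∀ U : Set X, IsOpen U → U.Nonempty →
    ∃ g : G, ENNReal.ofReal δ ≤ ediamD d (g • U)

/-- `G` is chaotic on `X`: it has a dense non-closed orbit and the union of its
closed orbits is dense. -/
def Chaotic (G X : Type*) [Group G] [MulAction G X] [TopologicalSpace X] : Prop :=
  (∃ x : X, Dense (MulAction.orbit G x) ∧ ¬ IsClosed (MulAction.orbit G x)) ∧
  Dense (⋃ x ∈ {y : X | IsClosed (MulAction.orbit G y)}, MulAction.orbit G x)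

open MulAction Filter Topology Metric

theorem ofReal_le_ediamD {X : Type*} (d : X → X → ℝ) {S : Set X} {y z : X} (hy : y ∈ S)
    (hz : z ∈ S) : ENNReal.ofReal (d y z) ≤ ediamD d S :=
  le_iSup₂ (f := fun (y : S) (z : S) => ENNReal.ofReal (d y.1 z.1)) ⟨y, hy⟩ ⟨z, hz⟩

section UniformlyNear

variable {G X : Type*} [Group G] [MulAction G X] [PseudoMetricSpace X]

def UniformlyNear (G : Type*) [Group G] [MulAction G X] (ε : ℝ) (a b : X) : Prop :=
  ∀ g : G, dist (g • a) (g • b) ≤ ε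

variable {ε δ : ℝ} {a b c : X}

theorem UniformlyNear.dist_le (h : UniformlyNear G ε a b) : dist a b ≤ ε := by
  simpa using h 1

theorem UniformlyNear.symm (h : UniformlyNear G ε a b) : UniformlyNear G ε b a :=
  fun g => dist_comm (g • a) (g • b) ▸ h g

theorem UniformlyNear.trans (hab : UniformlyNear G ε a b) (hbc : UniformlyNear G δ b c) :
    UniformlyNear G (ε + δ) a c :=
  fun g => (dist_triangle _ _ _).trans (add_le_add (hab g) (hbc g))

theorem UniformlyNear.smul (h : UniformlyNear G ε a b) (g : G) :
    UniformlyNear G ε (g • a) (g • b) :=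
  fun g' => by simpa only [smul_smul] using h (g' * g)

theorem isClosed_setOf_uniformlyNear [ContinuousConstSMul G X] (ε : ℝ) :
    IsClosed {p : X × X | UniformlyNear G ε p.1 p.2} := by
  simp only [UniformlyNear, Set.ofPred_forall]
  exact isClosed_iInter fun g =>
    isClosed_le ((continuous_fst.const_smul g).dist (continuous_snd.const_smul g))
      continuous_const

theorem exists_isOpen_uniformlyNear_of_not_sensitiveOn
    (hsens : ¬ SensitiveOn G (dist : X → X → ℝ)) (hε : 0 < ε) :
    ∃ U : Set X, IsOpen U ∧ U.Nonempty ∧ ∀ y ∈ U, ∀ z ∈ U, UniformlyNear G ε y z := by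
  unfold SensitiveOn at hsens
  push Not at hsens
  obtain ⟨U, hUo, hUne, hU⟩ := hsens ε hε
  refine ⟨U, hUo, hUne, fun y hy z hz g => ?_⟩
  have := (ofReal_le_ediamD dist (Set.smul_mem_smul_set (a := g) hy)
    (Set.smul_mem_smul_set hz)).trans_lt (hU g)
  exact ((ENNReal.ofReal_lt_ofReal_iff hε).1 this).le

theorem exists_isClosed_orbit_uniformlyNear {x : X} {U : Set X} (hx : Dense (orbit G x))
    (hclosed : Dense (⋃ y ∈ {y : X | IsClosed (orbit G y)}, orbit G y)) (hU : IsOpen U)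
    (hUne : U.Nonempty) (hnear : ∀ y ∈ U, ∀ z ∈ U, UniformlyNear G ε y z) :
    ∃ c : X, IsClosed (orbit G c) ∧ UniformlyNear G ε x c := by
  obtain ⟨c, hc, hcU⟩ := hclosed.exists_mem_open hU hUne
  obtain ⟨y, hy, hcy⟩ := Set.mem_iUnion₂.1 hc
  obtain ⟨_, ⟨g, rfl⟩, hgx⟩ := hx.exists_mem_open hU hUne
  refine ⟨g⁻¹ • c, ?_, by simpa using (hnear _ hgx c hcU).smul g⁻¹⟩
  rwa [orbit_smul, orbit_eq_iff.2 hcy]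

theorem exists_mem_orbit_uniformlyNear_of_isCompact
    [ContinuousConstSMul G X] {x z c : X} {ρ : ℝ}
    (hx : Dense (orbit G x)) (hK : IsCompact (closedBall z ρ)) (hερ : ε < ρ)
    (hc : IsClosed (orbit G c)) (hxc : UniformlyNear G ε x c) :
    ∃ w ∈ orbit G c, UniformlyNear G ε z w := by
  obtain ⟨a, ha, hlim⟩ := mem_closure_iff_seq_limit.1 (hx.closure_eq ▸ Set.mem_univ z)
  choose u hu using ha
  have hnear (n : ℕ) : UniformlyNear G ε (a n) (u n • c) := hu n ▸ hxc.smul (u n)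
  have hball : ∀ᶠ n in atTop, u n • c ∈ closedBall z ρ := by
    filter_upwards [hlim (ball_mem_nhds z (sub_pos.2 hερ))] with n hn
    calc dist (u n • c) z ≤ dist (u n • c) (a n) + dist (a n) z := dist_triangle _ _ _
      _ ≤ ε + (ρ - ε) := add_le_add (hnear n).symm.dist_le (mem_ball.1 hn).le
      _ = ρ := by ring
  obtain ⟨w, -, φ, hφ, hw⟩ := hK.tendsto_subseq' hball.frequently
  refine ⟨w, hc.mem_of_tendsto hw (Eventually.of_forall fun n => mem_orbit c _), ?_⟩
  exact (isClosed_setOf_uniformlyNear ε).mem_of_tendsto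
    ((hlim.comp hφ.tendsto_atTop).prodMk_nhds hw) (Eventually.of_forall fun n => hnear (φ n))

theorem exists_mem_orbit_dist_le_of_isCompact
    [ContinuousConstSMul G X] {x z c : X} {ρ : ℝ}
    (hx : Dense (orbit G x)) (hK : IsCompact (closedBall z ρ)) (hερ : ε < ρ)
    (hc : IsClosed (orbit G c)) (hxc : UniformlyNear G ε x c) :
    ∃ y ∈ orbit G z, dist x y ≤ ε + ε := by
  obtain ⟨_, ⟨v, rfl⟩, hzw⟩ := exists_mem_orbit_uniformlyNear_of_isCompact hx hK hερ hc hxc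
  have hcz : UniformlyNear G ε c (v⁻¹ • z) := by simpa using (hzw.smul v⁻¹).symm
  exact ⟨v⁻¹ • z, mem_orbit z _, (hxc.trans hcz).dist_le⟩

end UniformlyNear

theorem sensitive_of_chaotic_general {G X : Type*} [Group G] [MulAction G X]
    [MetricSpace X] [LocallyCompactSpace X]
    (hcont : ∀ g : G, Continuous fun x : X => g • x)
    (hchaos : Chaotic G X) :
    SensitiveOn G (dist : X → X → ℝ) := by
  by_contra hsens
  obtain ⟨⟨x, hx, hnotcl⟩, hclosed⟩ := hchaos
  have : ContinuousConstSMul G X := ⟨hcont⟩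
  have : Nonempty X := ⟨x⟩
  obtain ⟨z, hz, -⟩ := Set.mem_iUnion₂.1 hclosed.nonempty.some_mem
  obtain ⟨ρ, hρ, hK⟩ := exists_isCompact_closedBall z
  have hxz : x ∈ closure (orbit G z) := by
    refine Metric.mem_closure_iff.2 fun δ hδ => ?_
    have hε : 0 < min (δ / 3) (ρ / 2) := by positivity
    obtain ⟨U, hUo, hUne, hU⟩ := exists_isOpen_uniformlyNear_of_not_sensitiveOn hsens hε
    obtain ⟨c, hc, hxc⟩ := exists_isClosed_orbit_uniformlyNear hx hclosed hUo hUne hU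
    obtain ⟨y, hy, hxy⟩ := exists_mem_orbit_dist_le_of_isCompact hx hK
      ((min_le_right _ _).trans_lt (half_lt_self hρ)) hc hxc
    exact ⟨y, hy, by linarith [min_le_left (δ / 3) (ρ / 2)]⟩
  rw [hz.closure_eq] at hxz
  exact hnotcl (orbit_eq_iff.2 hxz ▸ hz)

/-- If a group `G` acts chaotically by homeomorphisms on a locally compact metric Baire
space `(X, d)`, then `G` is sensitive to initial conditions. -/
theorem sensitive_of_chaotic {G X : Type*} [Group G] [MulAction G X]
    [MetricSpace X] [LocallyCompactSpace X] [BaireSpace X]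
    (hcont : ∀ g : G, Continuous fun x : X => g • x)
    (hchaos : Chaotic G X) :
    SensitiveOn G (dist : X → X → ℝ) :=
  sensitive_of_chaotic_general hcont hchaos
end

section
/- Let (X, d) be a metric space and let G be a group acting on X by homeomorphisms having a dense non-closed orbit. Then G is sensitive to initial conditions if and only if there exists a sensitive point of G whose orbit is dense in X. -/
open Pointwise

/-- `G` is sensitive at the point `x`. -/
def SensitiveAt (G : Type*) {X : Type*} [Group G] [MulAction G X] [TopologicalSpace X]
    (d : X → X → ℝ) (x : X) : Prop :=
  ∃ δ : ℝ, 0 < δ ∧ ∀ U : Set X, IsOpen U → x ∈ U →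
    ∃ g : G, ENNReal.ofReal δ ≤ ediamD d (g • U)

theorem SensitiveOn.sensitiveAt {G X : Type*} [Group G] [MulAction G X] [TopologicalSpace X]
    {d : X → X → ℝ} (h : SensitiveOn G d) (x : X) : SensitiveAt G d x := by
  obtain ⟨δ, hδ, hsens⟩ := h
  exact ⟨δ, hδ, fun U hU hxU => hsens U hU ⟨x, hxU⟩⟩

/-- A nonempty open set `U` contains some `g₀ • x`, so `g₀⁻¹ • U` is an open neighbourhood of `x`
and the constant of sensitivity at `x` works for `U` as well. -/
theorem SensitiveAt.sensitiveOn_of_dense_orbit {G X : Type*} [Group G] [MulAction G X]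
    [TopologicalSpace X] [ContinuousConstSMul G X] {d : X → X → ℝ} {x : X}
    (hx : SensitiveAt G d x) (hdense : Dense (MulAction.orbit G x)) : SensitiveOn G d := by
  obtain ⟨δ, hδ, hsens⟩ := hx
  refine ⟨δ, hδ, fun U hU hUne => ?_⟩
  obtain ⟨_, ⟨g₀, rfl⟩, hg₀x⟩ := hdense.exists_mem_open hU hUne
  have hxU : x ∈ g₀⁻¹ • U := Set.mem_smul_set_iff_inv_smul_mem.mpr (by simpa using hg₀x)
  obtain ⟨g, hg⟩ := hsens _ (hU.smul g₀⁻¹) hxU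
  exact ⟨g * g₀⁻¹, by rwa [mul_smul]⟩

/-- For a group `G` acting by homeomorphisms on a metric space `(X, d)` and having a dense
non-closed orbit, `G` is sensitive to initial conditions if and only if there is a
sensitive point whose orbit is dense in `X`. -/
theorem sensitive_iff_exists_sensitive_denseOrbit {G X : Type*} [Group G] [MulAction G X]
    [MetricSpace X]
    (hcont : ∀ g : G, Continuous fun x : X => g • x)
    (hdno : ∃ x : X, Dense (MulAction.orbit G x) ∧ ¬ IsClosed (MulAction.orbit G x)) :
    SensitiveOn G (dist : X → X → ℝ) ↔
      ∃ x : X, SensitiveAt G (dist : X → X → ℝ) x ∧ Dense (MulAction.orbit G x) := by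
  have : ContinuousConstSMul G X := ⟨hcont⟩
  constructor
  · obtain ⟨x, hdense, -⟩ := hdno
    exact fun h => ⟨x, h.sensitiveAt x, hdense⟩
  · rintro ⟨x, hx, hdense⟩
    exact hx.sensitiveOn_of_dense_orbit hdense
end

section
/- Let (X_i, d̃_i), i = 1, …, m, be finitely many metric spaces with each d̃_i bounded by 1, equip X = ∏_{i=1}^m X_i with the product metric d(x, y) = Σ_{i=1}^m 2^{-i} d̃_i(x_i, y_i), and let G_i be a group acting on X_i by homeomorphisms for each i. Then the direct product group G = ∏_{i=1}^m G_i, acting canonically on X, is sensitive to initial conditions on (X, d) if and only if there exists n with 1 ≤ n ≤ m such that G_n is sensitive to initial conditions on (X_n, d̃_n). -/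
/-!
If no factor is sensitive for a given `δ`, choose in each factor an open set all of whose
translates have diameter at most `δ`; the translates of their product then have diameter at most
`(∑ᵢ 2^{-i-1}) δ < δ`. Conversely, if `G_n` is sensitive with constant `δ`, perturb a point of an
open set only in its `n`-th coordinate and act by `g` on that coordinate alone: this realizes
`2^{-n-1} δ` as a diameter in the product.
-/

open Pointwise

open Finset Function

section ediamD

variable {X Y : Type*}

lemma le_ediamD (d : X → X → ℝ) {S : Set X} {y z : X} (hy : y ∈ S) (hz : z ∈ S) :
    ENNReal.ofReal (d y z) ≤ ediamD d S :=
  le_iSup₂_of_le (f := fun (a : S) (b : S) => ENNReal.ofReal (d a.1 b.1)) ⟨y, hy⟩ ⟨z, hz⟩ le_rfl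

lemma ediamD_le {d : X → X → ℝ} {S : Set X} {C : ENNReal}
    (h : ∀ y ∈ S, ∀ z ∈ S, ENNReal.ofReal (d y z) ≤ C) : ediamD d S ≤ C :=
  iSup₂_le fun y z => h y.1 y.2 z.1 z.2

lemma ediamD_mono (d : X → X → ℝ) {S T : Set X} (hST : S ⊆ T) : ediamD d S ≤ ediamD d T :=
  ediamD_le fun _ hy _ hz => le_ediamD d (hST hy) (hST hz)

lemma ofReal_mul_ediamD_le_ediamD_image {d : X → X → ℝ} {d' : Y → Y → ℝ} {f : X → Y} {c : ℝ}
    (hc : 0 ≤ c) (hf : ∀ a b, d' (f a) (f b) = c * d a b) (S : Set X) :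
    ENNReal.ofReal c * ediamD d S ≤ ediamD d' (f '' S) := by
  simp only [ediamD, ENNReal.mul_iSup]
  refine iSup₂_le fun a b => ?_
  rw [← ENNReal.ofReal_mul hc, ← hf]
  exact le_ediamD d' (Set.mem_image_of_mem f a.2) (Set.mem_image_of_mem f b.2)

end ediamD

section Pi

variable {ι : Type*} {X G : ι → Type*} [∀ i, Group (G i)] [∀ i, MulAction (G i) (X i)]

lemma smul_set_univ_pi (g : ∀ i, G i) (S : ∀ i, Set (X i)) :
    g • Set.univ.pi S = Set.univ.pi fun i => g i • S i := by
  ext y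
  simp only [Set.mem_smul_set_iff_inv_smul_mem, Set.mem_univ_pi]
  rfl

lemma mulSingle_smul_update [DecidableEq ι] (n : ι) (g : G n) (x : ∀ i, X i) (a : X n) :
    Pi.mulSingle n g • update x n a = update x n (g • a) := by
  ext i
  rcases eq_or_ne i n with rfl | hin
  · simp
  · simp [Pi.smul_apply', Pi.mulSingle_eq_of_ne hin, update_of_ne hin]

variable [Fintype ι]

def piWeightedDist [∀ i, Dist (X i)] (w : ι → ℝ) (x y : ∀ i, X i) : ℝ :=
  ∑ i, w i * dist (x i) (y i)

lemma piWeightedDist_update_update [DecidableEq ι] [∀ i, PseudoMetricSpace (X i)] (w : ι → ℝ)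
    (x : ∀ i, X i) (n : ι) (a b : X n) :
    piWeightedDist w (update x n a) (update x n b) = w n * dist a b := by
  rw [piWeightedDist, sum_eq_single n (fun i _ hin => by simp [update_of_ne hin]) (by simp)]
  simp

lemma ediamD_pi_le [∀ i, Dist (X i)] {w : ι → ℝ} (hw : ∀ i, 0 ≤ w i) {S : ∀ i, Set (X i)}
    {δ : ℝ} (hδ : 0 ≤ δ) (hS : ∀ i, ediamD dist (S i) ≤ ENNReal.ofReal δ) :
    ediamD (piWeightedDist w) (Set.univ.pi S) ≤ ENNReal.ofReal ((∑ i, w i) * δ) := by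
  refine ediamD_le fun y hy z hz => ENNReal.ofReal_le_ofReal ?_
  rw [piWeightedDist, sum_mul]
  refine sum_le_sum fun i _ => mul_le_mul_of_nonneg_left ?_ (hw i)
  exact (ENNReal.ofReal_le_ofReal_iff hδ).1
    ((le_ediamD dist (hy i trivial) (hz i trivial)).trans (hS i))

lemma exists_sensitiveOn_of_sensitiveOn_pi [∀ i, TopologicalSpace (X i)] [∀ i, Dist (X i)]
    {w : ι → ℝ} (hw : ∀ i, 0 ≤ w i) (hw_sum : ∑ i, w i < 1)
    (h : SensitiveOn (∀ i, G i) (piWeightedDist w : (∀ i, X i) → (∀ i, X i) → ℝ)) :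
    ∃ n, SensitiveOn (G n) (dist : X n → X n → ℝ) := by
  obtain ⟨δ, hδ, hsens⟩ := h
  by_contra! hno
  simp only [SensitiveOn, not_exists, not_and, not_forall, not_le] at hno
  choose U hU_open hU_ne hU_small using fun i => hno i δ hδ
  obtain ⟨g, hg⟩ := hsens (Set.univ.pi U) (isOpen_set_pi Set.finite_univ fun i _ => hU_open i)
    (Set.univ_pi_nonempty_iff.2 hU_ne)
  have hbound := ediamD_pi_le hw hδ.le fun i => (hU_small i (g i)).le
  rw [← smul_set_univ_pi] at hbound
  have hlt : (∑ i, w i) * δ < δ := by nlinarith [sum_nonneg fun i (_ : i ∈ univ) => hw i]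
  exact (hg.trans hbound).not_gt ((ENNReal.ofReal_lt_ofReal_iff hδ).2 hlt)

theorem SensitiveOn.pi [DecidableEq ι] [∀ i, PseudoMetricSpace (X i)] {w : ι → ℝ} {n : ι}
    (hwn : 0 < w n) (h : SensitiveOn (G n) (dist : X n → X n → ℝ)) :
    SensitiveOn (∀ i, G i) (piWeightedDist w : (∀ i, X i) → (∀ i, X i) → ℝ) := by
  obtain ⟨δ, hδ, hsens⟩ := h
  refine ⟨w n * δ, by positivity, fun U hU ⟨x, hx⟩ => ?_⟩
  set V : Set (X n) := update x n ⁻¹' U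
  have hV_open : IsOpen V := hU.preimage (continuous_const.update n continuous_id)
  obtain ⟨g, hg⟩ := hsens V hV_open ⟨x n, by simpa [V] using hx⟩
  refine ⟨Pi.mulSingle n g, ?_⟩
  have hslice : update x n '' (g • V) ⊆ Pi.mulSingle n g • U := by
    rintro _ ⟨_, ⟨a, ha, rfl⟩, rfl⟩
    rw [← mulSingle_smul_update]
    exact Set.smul_mem_smul_set ha
  calc ENNReal.ofReal (w n * δ) = ENNReal.ofReal (w n) * ENNReal.ofReal δ :=
        ENNReal.ofReal_mul hwn.le
    _ ≤ ENNReal.ofReal (w n) * ediamD dist (g • V) := mul_le_mul_right hg _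
    _ ≤ ediamD (piWeightedDist w) (update x n '' (g • V)) :=
        ofReal_mul_ediamD_le_ediamD_image hwn.le (piWeightedDist_update_update w x n) _
    _ ≤ ediamD (piWeightedDist w) (Pi.mulSingle n g • U) := ediamD_mono _ hslice

end Pi

lemma sum_range_half_pow_succ (m : ℕ) :
    ∑ i ∈ range m, (1 / 2 : ℝ) ^ (i + 1) = 1 - (1 / 2 : ℝ) ^ m := by
  induction m with
  | zero => simp
  | succ k ih => rw [sum_range_succ, ih]; ring

theorem finiteProduct_sensitive_iff_general {m : ℕ} {X G : Fin m → Type*}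
    [∀ i, MetricSpace (X i)] [∀ i, Group (G i)] [∀ i, MulAction (G i) (X i)]
    (d : (∀ i, X i) → (∀ i, X i) → ℝ)
    (hd : ∀ x y, d x y = ∑ i : Fin m, (1 / 2 : ℝ) ^ ((i : ℕ) + 1) * dist (x i) (y i)) :
    SensitiveOn (∀ i, G i) d ↔
      ∃ n : Fin m, SensitiveOn (G n) (dist : X n → X n → ℝ) := by
  obtain rfl : d = piWeightedDist fun i : Fin m => (1 / 2 : ℝ) ^ ((i : ℕ) + 1) :=
    funext₂ hd
  have hw_sum : ∑ i : Fin m, (1 / 2 : ℝ) ^ ((i : ℕ) + 1) < 1 := by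
    rw [Fin.sum_univ_eq_sum_range (fun i => (1 / 2 : ℝ) ^ (i + 1)), sum_range_half_pow_succ]
    linarith [pow_pos (one_half_pos : (0 : ℝ) < 1 / 2) m]
  exact ⟨exists_sensitiveOn_of_sensitiveOn_pi (fun _ => by positivity) hw_sum,
    fun ⟨_, hn⟩ => hn.pi (by positivity)⟩

/-- Let `(X_i, dist)`, `i = 1, …, m`, be finitely many metric spaces with metrics bounded
by `1`, acted on by homeomorphisms by groups `G_i`, and equip `X = ∏ X_i` with the product
metric `d(x, y) = Σ_i 2⁻ⁱ dist (x_i) (y_i)`. Then the direct product group `∏ G_i`, acting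
canonically on `X`, is sensitive to initial conditions on `(X, d)` if and only if some
`G_n` is sensitive to initial conditions on `(X_n, dist)`. -/
theorem finiteProduct_sensitive_iff {m : ℕ} {X G : Fin m → Type*}
    [∀ i, MetricSpace (X i)] [∀ i, Group (G i)] [∀ i, MulAction (G i) (X i)]
    (hbdd : ∀ (i : Fin m) (x y : X i), dist x y ≤ 1)
    (hcont : ∀ (i : Fin m) (g : G i), Continuous fun x : X i => g • x)
    (d : (∀ i, X i) → (∀ i, X i) → ℝ)
    (hd : ∀ x y, d x y = ∑ i : Fin m, (1 / 2 : ℝ) ^ ((i : ℕ) + 1) * dist (x i) (y i)) :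
    SensitiveOn (∀ i, G i) d ↔
      ∃ n : Fin m, SensitiveOn (G n) (dist : X n → X n → ℝ) :=
  finiteProduct_sensitive_iff_general d hd
end
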